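/- arXiv:2111.10599 — 3 statements merged into one kernel-verified Lean document; each statement's English description precedes it below -/
import Mathlib

section
/- The function K(u,v) = −4/(u−v)⁴, defined for u ≠ v, satisfies the natural equation of minimal Lorentz surfaces: √|K| · ∂²/∂u∂v ( ln √|K| ) = K. -/
/-! On the open set `u ≠ v` one has `ln √|K| = ln 2 - 2 ln (u - v)`, whose `u`-derivative is
`-2 / (u - v)` and whose mixed derivative is therefore `-2 / (u - v)²`; multiplying by
`√|K| = 2 / (u - v)²` gives `-4 / (u - v)⁴ = K`. -/

/-- Partial derivative with respect to the first variable. -/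
noncomputable def pderivU (f : ℝ → ℝ → ℝ) (u v : ℝ) : ℝ := deriv (fun t => f t v) u

/-- Partial derivative with respect to the second variable. -/
noncomputable def pderivV (f : ℝ → ℝ → ℝ) (u v : ℝ) : ℝ := deriv (fun t => f u t) v

/-- Mixed second partial derivative ∂²/∂u∂v. -/
noncomputable def pderivUV (f : ℝ → ℝ → ℝ) (u v : ℝ) : ℝ := pderivV (pderivU f) u v

/-- K(u,v) = −4/(u−v)⁴. -/
noncomputable def Kfun (u v : ℝ) : ℝ := -4 / (u - v)^4

open Real

section Congr

variable {f g : ℝ → ℝ → ℝ} {S : Set (ℝ × ℝ)} {u v : ℝ}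

theorem pderivU_congr (hS : IsOpen S) (hfg : ∀ p ∈ S, f p.1 p.2 = g p.1 p.2) (h : (u, v) ∈ S) :
    pderivU f u v = pderivU g u v := by
  have hnhds : {s | (s, v) ∈ S} ∈ nhds u :=
    (hS.preimage (continuous_id.prodMk continuous_const)).mem_nhds h
  exact Filter.EventuallyEq.deriv_eq (Filter.mem_of_superset hnhds fun s hs => hfg (s, v) hs)

theorem pderivV_congr (hS : IsOpen S) (hfg : ∀ p ∈ S, f p.1 p.2 = g p.1 p.2) (h : (u, v) ∈ S) :
    pderivV f u v = pderivV g u v := by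
  have hnhds : {t | (u, t) ∈ S} ∈ nhds v :=
    (hS.preimage (continuous_const.prodMk continuous_id)).mem_nhds h
  exact Filter.EventuallyEq.deriv_eq (Filter.mem_of_superset hnhds fun t ht => hfg (u, t) ht)

end Congr

theorem pderivU_const_sub_two_mul_log_sub (c : ℝ) {u v : ℝ} (h : u ≠ v) :
    pderivU (fun a b => c - 2 * log (a - b)) u v = -2 / (u - v) := by
  have hd := ((((hasDerivAt_id' u).sub_const v).log (sub_ne_zero.mpr h)).const_mul 2).const_sub c
  exact (hd.congr_deriv (by ring)).deriv

theorem pderivV_neg_two_div_sub {u v : ℝ} (h : u ≠ v) :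
    pderivV (fun a b => -2 / (a - b)) u v = -2 / (u - v) ^ 2 := by
  have hd := (((hasDerivAt_id' v).const_sub u).inv (sub_ne_zero.mpr h)).const_mul (-2)
  exact (hd.congr_deriv (by ring)).deriv

theorem sqrt_abs_Kfun {u v : ℝ} (h : u ≠ v) : √|Kfun u v| = 2 / (u - v) ^ 2 := by
  have huv : u - v ≠ 0 := sub_ne_zero.mpr h
  have habs : |Kfun u v| = (2 / (u - v) ^ 2) ^ 2 := by
    rw [Kfun, abs_div, abs_of_neg (by norm_num : (-4 : ℝ) < 0), abs_of_pos (by positivity)]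
    field_simp
    norm_num
  rw [habs, sqrt_sq (by positivity)]

theorem log_sqrt_abs_Kfun {u v : ℝ} (h : u ≠ v) :
    log √|Kfun u v| = log 2 - 2 * log (u - v) := by
  rw [sqrt_abs_Kfun h, log_div two_ne_zero (pow_ne_zero 2 (sub_ne_zero.mpr h)), log_pow]
  push_cast
  ring

theorem stmt1 (u v : ℝ) (h : u ≠ v) :
    Real.sqrt |Kfun u v| *
      pderivUV (fun a b => Real.log (Real.sqrt |Kfun a b|)) u v = Kfun u v := by
  have hS : IsOpen {p : ℝ × ℝ | p.1 ≠ p.2} := isOpen_ne_fun continuous_fst continuous_snd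
  have hU : ∀ p ∈ {p : ℝ × ℝ | p.1 ≠ p.2},
      pderivU (fun a b => log √|Kfun a b|) p.1 p.2 = -2 / (p.1 - p.2) := fun p hp =>
    (pderivU_congr hS (fun q hq => log_sqrt_abs_Kfun hq) hp).trans
      (pderivU_const_sub_two_mul_log_sub (log 2) hp)
  have hUV : pderivUV (fun a b => log √|Kfun a b|) u v = -2 / (u - v) ^ 2 :=
    (pderivV_congr hS hU h).trans (pderivV_neg_two_div_sub h)
  have huv : u - v ≠ 0 := sub_ne_zero.mpr h
  rw [hUV, sqrt_abs_Kfun h, Kfun]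
  field_simp
  norm_num
end

section
/- For the map x(u,v) = (sinh(u−v)·sech(u+v), cosh(u−v)·sech(u+v), tanh(u+v)) into R³₁, one has ⟨x_u,x_u⟩ = 0, ⟨x_v,x_v⟩ = 0, and ⟨x_u,x_v⟩ = 2·sech²(u+v). -/
/-- Indefinite inner product of signature (-,+,+) on ℝ³₁ = ℝ × ℝ × ℝ. -/
noncomputable def ip (a b : ℝ × ℝ × ℝ) : ℝ :=
  -(a.1 * b.1) + a.2.1 * b.2.1 + a.2.2 * b.2.2

/-- sech t = 1 / cosh t. -/
noncomputable def sech (t : ℝ) : ℝ := 1 / Real.cosh t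

/-- The Lorentz-sphere map. -/
noncomputable def xS (u v : ℝ) : ℝ × ℝ × ℝ :=
  (Real.sinh (u - v) * sech (u + v), Real.cosh (u - v) * sech (u + v), Real.tanh (u + v))

noncomputable def xS_u (u v : ℝ) : ℝ × ℝ × ℝ :=
  (pderivU (fun a b => (xS a b).1) u v,
   pderivU (fun a b => (xS a b).2.1) u v,
   pderivU (fun a b => (xS a b).2.2) u v)

noncomputable def xS_v (u v : ℝ) : ℝ × ℝ × ℝ :=
  (pderivV (fun a b => (xS a b).1) u v,
   pderivV (fun a b => (xS a b).2.1) u v,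
   pderivV (fun a b => (xS a b).2.2) u v)

/-!
Both partial derivatives are multiples of vectors `(cosh a, sinh a, s)`:
`x_u = sech²(u+v) (cosh 2v, -sinh 2v, 1)` and `x_v = -sech²(u+v) (cosh 2u, sinh 2u, -1)`.
Since `⟨(cosh a, sinh a, s), (cosh b, sinh b, t)⟩ = s t - cosh (a - b)`, both are null for
`s = ±1`, and their product reduces to `1 + cosh (2(u+v)) = 2 cosh² (u+v)`.
-/

open Real

lemma hasDerivAt_sech (x : ℝ) : HasDerivAt sech (-(sech x * tanh x)) x := by
  have hsech : sech = fun t => (cosh t)⁻¹ := funext fun t => one_div _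
  have hderiv : -(sech x * tanh x) = -sinh x / cosh x ^ 2 := by
    unfold sech; rw [tanh_eq_sinh_div_cosh]; ring
  rw [hderiv, hsech]
  exact (hasDerivAt_cosh x).inv (cosh_pos x).ne'

lemma hasDerivAt_mul_sech {f g : ℝ → ℝ} {f' g' x : ℝ} (hf : HasDerivAt f f' x)
    (hg : HasDerivAt g g' x) :
    HasDerivAt (fun t => f t * sech (g t))
      (sech (g x) ^ 2 * (f' * cosh (g x) - f x * g' * sinh (g x))) x := by
  refine (hf.mul ((hasDerivAt_sech (g x)).comp x hg)).congr_deriv ?_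
  have hc := (cosh_pos (g x)).ne'
  simp only [Function.comp_apply, sech, tanh_eq_sinh_div_cosh]
  field_simp
  ring

lemma xS_eq (u v : ℝ) :
    xS u v = (sinh (u - v) * sech (u + v), cosh (u - v) * sech (u + v),
      sinh (u + v) * sech (u + v)) := by
  simp only [xS, sech, tanh_eq_sinh_div_cosh, mul_one_div]

noncomputable def nullVec (a s : ℝ) : ℝ × ℝ × ℝ := (cosh a, sinh a, s)

lemma ip_smul_smul (c d : ℝ) (a b : ℝ × ℝ × ℝ) : ip (c • a) (d • b) = c * d * ip a b := by
  simp only [ip, Prod.smul_fst, Prod.smul_snd, smul_eq_mul]; ring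

lemma ip_nullVec (a b s t : ℝ) : ip (nullVec a s) (nullVec b t) = s * t - cosh (a - b) := by
  rw [ip, nullVec, nullVec, cosh_sub]; ring

lemma xS_u_eq (u v : ℝ) : xS_u u v = sech (u + v) ^ 2 • nullVec (-(2 * v)) 1 := by
  have hp : HasDerivAt (fun t => t - v) 1 u := (hasDerivAt_id u).sub_const v
  have hq : HasDerivAt (fun t => t + v) 1 u := (hasDerivAt_id u).add_const v
  simp only [xS_u, pderivU, xS_eq, (hasDerivAt_mul_sech hp.sinh hq).deriv,
    (hasDerivAt_mul_sech hp.cosh hq).deriv, (hasDerivAt_mul_sech hq.sinh hq).deriv]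
  rw [show -(2 * v) = (u - v) - (u + v) by ring, nullVec,
    cosh_sub (u - v), sinh_sub (u - v)]
  ext <;> simp only [Prod.smul_mk, smul_eq_mul]
  · ring
  · ring
  · linear_combination sech (u + v) ^ 2 * cosh_sq_sub_sinh_sq (u + v)

lemma xS_v_eq (u v : ℝ) : xS_v u v = -sech (u + v) ^ 2 • nullVec (2 * u) (-1) := by
  have hp : HasDerivAt (fun t => u - t) (-1) v := by
    simpa using (hasDerivAt_id v).const_sub u
  have hq : HasDerivAt (fun t => u + t) 1 v := by
    simpa using (hasDerivAt_id v).const_add u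
  simp only [xS_v, pderivV, xS_eq, (hasDerivAt_mul_sech hp.sinh hq).deriv,
    (hasDerivAt_mul_sech hp.cosh hq).deriv, (hasDerivAt_mul_sech hq.sinh hq).deriv]
  rw [show 2 * u = (u - v) + (u + v) by ring, nullVec,
    cosh_add (u - v), sinh_add (u - v)]
  ext <;> simp only [Prod.smul_mk, smul_eq_mul]
  · ring
  · ring
  · linear_combination sech (u + v) ^ 2 * cosh_sq_sub_sinh_sq (u + v)

theorem stmt3 (u v : ℝ) :
    ip (xS_u u v) (xS_u u v) = 0 ∧
    ip (xS_v u v) (xS_v u v) = 0 ∧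
    ip (xS_u u v) (xS_v u v) = 2 * (sech (u + v))^2 := by
  rw [xS_u_eq, xS_v_eq]
  simp only [ip_smul_smul, ip_nullVec, sub_self, cosh_zero]
  refine ⟨by ring, by ring, ?_⟩
  have hc := (cosh_pos (u + v)).ne'
  rw [show -(2 * v) - 2 * u = -(2 * (u + v)) by ring, cosh_neg, cosh_two_mul, sech]
  field_simp
  linear_combination -cosh_sq_sub_sinh_sq (u + v)
end

section
/- Let F > 0 be a smooth function with constant H, and suppose (F·F_{uv} − F_u F_v)/F = ε₁ε₂ − F²H² where ε₁, ε₂ ∈ {−1,1}. Define K by H² − K = ε₁ε₂/F². Then K satisfies √|H²−K| · (ln √|H²−K|)_{uv} = K. -/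
/-- If F > 0 is smooth, H is constant, the CMC natural equation
    (F·F_{uv} − F_u F_v)/F = ε₁ε₂ − F²H² holds, and K is defined by
    H² − K = ε₁ε₂/F², then √|H²−K| · (ln √|H²−K|)_{uv} = K. -/
theorem stmt17 (F : ℝ → ℝ → ℝ)
    (hF : ContDiff ℝ (⊤ : ℕ∞) (fun p : ℝ × ℝ => F p.1 p.2))
    (hFpos : ∀ u v, 0 < F u v)
    (H : ℝ) (ε₁ ε₂ : ℝ) (hε₁ : ε₁ = 1 ∨ ε₁ = -1) (hε₂ : ε₂ = 1 ∨ ε₂ = -1)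
    (hnat : ∀ u v, (F u v * pderivUV F u v - pderivU F u v * pderivV F u v) / F u v =
      ε₁ * ε₂ - (F u v)^2 * H^2)
    (K : ℝ → ℝ → ℝ) (hK : ∀ u v, H^2 - K u v = ε₁ * ε₂ / (F u v)^2) :
    ∀ u v, Real.sqrt |H^2 - K u v| *
      pderivUV (fun a b => Real.log (Real.sqrt |H^2 - K a b|)) u v = K u v := by
  have hε : |ε₁ * ε₂| = 1 := by
    rcases hε₁ with h|h <;> rcases hε₂ with h'|h' <;> simp [h, h']
  have hsqrt : ∀ u v, Real.sqrt |H^2 - K u v| = (F u v)⁻¹ := by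
    intro u v
    have : |H^2 - K u v| = ((F u v)⁻¹)^2 := by
      rw [hK u v, abs_div, hε, abs_of_pos (pow_pos (hFpos u v) 2)]
      field_simp
    rw [this, Real.sqrt_sq (inv_nonneg.mpr (hFpos u v).le)]
  have hfun : (fun a b => Real.log (Real.sqrt |H^2 - K a b|)) =
      fun a b => -Real.log (F a b) := by
    funext a b
    rw [hsqrt a b, Real.log_inv]
  set G : ℝ × ℝ → ℝ := fun p => F p.1 p.2 with hGdef
  have hGdiff : Differentiable ℝ G := hF.differentiable (by simp)
  have hlineU : ∀ v, ContDiff ℝ (⊤ : ℕ∞) (fun t : ℝ => F t v) := fun v =>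
    hF.comp (contDiff_id.prodMk contDiff_const)
  have hlineV : ∀ u, ContDiff ℝ (⊤ : ℕ∞) (fun t : ℝ => F u t) := fun u =>
    hF.comp (contDiff_const.prodMk contDiff_id)
  have hFu : ContDiff ℝ (⊤ : ℕ∞) (fun p : ℝ × ℝ => fderiv ℝ G p (1, 0)) := by
    have h1 : ContDiff ℝ (⊤ : ℕ∞) (fun p : ℝ × ℝ => fderiv ℝ G p) := hF.fderiv_right (by simp)
    exact (ContinuousLinearMap.apply ℝ ℝ ((1:ℝ), (0:ℝ))).contDiff.comp h1
  have hpU : ∀ u v, pderivU F u v = fderiv ℝ G (u, v) (1, 0) := by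
    intro u v
    have h1 : HasDerivAt (fun t : ℝ => (t, v)) ((1:ℝ), (0:ℝ)) u :=
      (hasDerivAt_id u).prodMk (hasDerivAt_const u v)
    have h2 : HasDerivAt (fun t : ℝ => F t v) (fderiv ℝ G (u, v) (1, 0)) u :=
      by have := (hGdiff (u, v)).hasFDerivAt.comp_hasDerivAt u h1; exact this
    exact h2.deriv
  intro u v
  rw [hfun]
  have hFne : ∀ a b, F a b ≠ 0 := fun a b => (hFpos a b).ne'
  -- inner derivative: for all t, deriv (fun s => -log (F s t)) u = -(pderivU F u t / F u t)
  have hinner : ∀ t, deriv (fun s => -Real.log (F s t)) u = -(pderivU F u t / F u t) := by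
    intro t
    rw [deriv.fun_neg]
    congr 1
    exact deriv.log ((hlineU t).differentiable (by simp) u) (hFne u t)
  have hdiffNum : DifferentiableAt ℝ (fun t => pderivU F u t) v := by
    have : (fun t => pderivU F u t) = fun t => fderiv ℝ G (u, t) (1, 0) := by
      funext t; exact hpU u t
    rw [this]
    exact ((hFu.comp (contDiff_const.prodMk contDiff_id)).differentiable (by simp)) v
  have hdiffDen : DifferentiableAt ℝ (fun t => F u t) v :=
    (hlineV u).differentiable (by simp) v
  have houter : pderivUV (fun a b => -Real.log (F a b)) u v =
      -((pderivUV F u v * F u v - pderivU F u v * pderivV F u v) / (F u v)^2) := by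
    show deriv (fun t => deriv (fun s => -Real.log (F s t)) u) v = _
    have heq : (fun t => deriv (fun s => -Real.log (F s t)) u) =
        fun t => -(pderivU F u t / F u t) := funext hinner
    rw [heq, deriv.fun_neg, deriv_fun_div hdiffNum hdiffDen (hFne u v)]
    rfl
  rw [houter]
  have hn := hnat u v
  have hk := hK u v
  have hFne' := hFne u v
  have hn' : F u v * pderivUV F u v - pderivU F u v * pderivV F u v =
      F u v * (ε₁ * ε₂ - (F u v)^2 * H^2) := by
    field_simp at hn
    linarith [hn]
  rw [hsqrt u v]
  have hKval : K u v = H^2 - ε₁ * ε₂ / (F u v)^2 := by linarith [hk]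
  rw [hKval]
  field_simp
  nlinarith [hn', sq_nonneg (F u v), hFpos u v]
end
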